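/- Upward propagation of evaluation: if Γ ⊢ e : τ, the environments correspond (U | μ : V : Γ [ro: r, rw: w]), and the update semantics evaluates U ⊢ e | μ ⇓ u | μ', then there exists a value v such that the value semantics evaluates V ⊢ e ⇓ v. -/

import Mathlib

/-- Permissions: Discardable, Shareable, Escapable. -/
inductive Perm | D | S | E
deriving DecidableEq

abbrev Kind := Set Perm

/-- Storage modes. -/
inductive Mode | readOnly | writable | unboxed
deriving DecidableEq

/-- The kind of a mode. -/
def kindOf : Mode → Kind
  | .readOnly => {Perm.D, Perm.S}
  | .writable => {Perm.E}
  | .unboxed  => {Perm.D, Perm.S, Perm.E}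

/-- Types: primitives, unit, variants (constructor-indexed; `none` marks a
    removed alternative), and records with possibly-taken fields (`true` =
    taken) and a storage mode. -/
inductive Ty
  | prim
  | unit
  | variant (ts : List (Option Ty))
  | record (fs : List (Ty × Bool)) (m : Mode)

/-- The kinding judgement for closed types. -/
inductive Kinding : Ty → Kind → Prop
  | prim : Kinding .prim κ
  | unit : Kinding .unit κ
  | variant : (∀ t ∈ ts, ∀ τ, t = some τ → Kinding τ κ) → Kinding (.variant ts) κ
  | record : κ ⊆ kindOf m → (∀ p ∈ fs, p.2 = false → Kinding p.1 κ) →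
      Kinding (.record fs m) κ

/-- Expressions (de Bruijn indices). -/
inductive Expr
  | var (n : ℕ)
  | unit
  | lit (n : ℕ)
  | letE (e₁ e₂ : Expr)
  | con (c : ℕ) (e : Expr)
  | caseE (e₁ : Expr) (c : ℕ) (e₂ e₃ : Expr)
  | rcd (es : List Expr)
  | take (e₁ : Expr) (k : ℕ) (e₂ : Expr)
  | put (e₁ : Expr) (k : ℕ) (e₂ : Expr)

abbrev Ptr := ℕ

/-- Update-semantics values. -/
inductive UVal
  | lit (n : ℕ)
  | unit
  | con (c : ℕ) (u : UVal)
  | rcd (us : List UVal)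
  | ptr (p : Ptr)

/-- Value-semantics values. -/
inductive VVal
  | lit (n : ℕ)
  | unit
  | con (c : ℕ) (v : VVal)
  | rcd (vs : List VVal)

/-- Mutable stores. -/
abbrev Store := Ptr → Option UVal

abbrev Ctx := List (Option Ty)

/-- Context weakening: dropped bindings must be discardable. -/
inductive Weaken : Ctx → Ctx → Prop
  | nil : Weaken [] []
  | keep : Weaken Γ Γ' → Weaken (o :: Γ) (o :: Γ')
  | drop : Kinding τ κ → Perm.D ∈ κ → Weaken Γ Γ' →
      Weaken (some τ :: Γ) (none :: Γ')

/-- Context splitting: duplicated bindings must be shareable. -/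
inductive Split : Ctx → Ctx → Ctx → Prop
  | nil : Split [] [] []
  | none : Split Γ Γ₁ Γ₂ → Split (none :: Γ) (none :: Γ₁) (none :: Γ₂)
  | left : Split Γ Γ₁ Γ₂ → Split (some τ :: Γ) (some τ :: Γ₁) (none :: Γ₂)
  | right : Split Γ Γ₁ Γ₂ → Split (some τ :: Γ) (none :: Γ₁) (some τ :: Γ₂)
  | both : Kinding τ κ → Perm.S ∈ κ → Split Γ Γ₁ Γ₂ →
      Split (some τ :: Γ) (some τ :: Γ₁) (some τ :: Γ₂)

/-- A context containing exactly one binding, at position n. -/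
def OnlyAt (Γ : Ctx) (n : ℕ) (τ : Ty) : Prop :=
  Γ[n]? = some (some τ) ∧ ∀ m, m ≠ n → ∀ τ', Γ[m]? = some (some τ') → False

/-- A context containing no bindings. -/
def AllNone (Γ : Ctx) : Prop := ∀ o ∈ Γ, o = none

mutual
/-- The linear typing judgement Γ ⊢ e : τ. -/
inductive Typing : Ctx → Expr → Ty → Prop
  | var : Weaken Γ Γ' → OnlyAt Γ' n τ → Typing Γ (.var n) τ
  | unit : Weaken Γ Γ' → AllNone Γ' → Typing Γ .unit .unit
  | lit : Weaken Γ Γ' → AllNone Γ' → Typing Γ (.lit n) .prim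
  | letE : Split Γ Γ₁ Γ₂ → Typing Γ₁ e₁ ρ → Typing (some ρ :: Γ₂) e₂ τ →
      Typing Γ (.letE e₁ e₂) τ
  | con : ts[c]? = some (some τ) → Typing Γ e τ →
      Typing Γ (.con c e) (.variant ts)
  | caseE : Split Γ Γ₁ Γ₂ → Typing Γ₁ e₁ (.variant ts) →
      ts[c]? = some (some ρ) →
      Typing (some ρ :: Γ₂) e₂ τ →
      Typing (some (.variant (ts.set c none)) :: Γ₂) e₃ τ →
      Typing Γ (.caseE e₁ c e₂ e₃) τ
  | rcd : TypingList Γ es τs →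
      Typing Γ (.rcd es) (.record (τs.map ((·, false))) .unboxed)
  | take : Split Γ Γ₁ Γ₂ → m ≠ .readOnly →
      Typing Γ₁ e₁ (.record fs m) → fs[k]? = some (ρ, false) →
      Typing (some (.record (fs.set k (ρ, true)) m) :: some ρ :: Γ₂) e₂ τ →
      Typing Γ (.take e₁ k e₂) τ
  | put : Split Γ Γ₁ Γ₂ → m ≠ .readOnly →
      Typing Γ₁ e₁ (.record fs m) → fs[k]? = some (ρ, true) →
      Typing Γ₂ e₂ ρ →
      Typing Γ (.put e₁ k e₂) (.record (fs.set k (ρ, false)) m)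

/-- Typing of lists of expressions (for record construction). -/
inductive TypingList : Ctx → List Expr → List Ty → Prop
  | nil : Weaken Γ Γ' → AllNone Γ' → TypingList Γ [] []
  | cons : Split Γ Γ₁ Γ₂ → Typing Γ₁ e τ → TypingList Γ₂ es τs →
      TypingList Γ (e :: es) (τ :: τs)
end

mutual
/-- Big-step value semantics V ⊢ e ⇓ v. -/
inductive VEval : List VVal → Expr → VVal → Prop
  | var : V[n]? = some v → VEval V (.var n) v
  | unit : VEval V .unit .unit
  | lit : VEval V (.lit n) (.lit n)
  | letE : VEval V e₁ v₁ → VEval (v₁ :: V) e₂ v → VEval V (.letE e₁ e₂) v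
  | con : VEval V e v → VEval V (.con c e) (.con c v)
  | caseMatch : VEval V e₁ (.con c v') → VEval (v' :: V) e₂ v →
      VEval V (.caseE e₁ c e₂ e₃) v
  | caseElse : VEval V e₁ (.con b v') → b ≠ c → VEval (.con b v' :: V) e₃ v →
      VEval V (.caseE e₁ c e₂ e₃) v
  | rcd : VEvalList V es vs → VEval V (.rcd es) (.rcd vs)
  | take : VEval V e₁ (.rcd vs) → vs[k]? = some vk →
      VEval (.rcd vs :: vk :: V) e₂ v → VEval V (.take e₁ k e₂) v
  | put : VEval V e₁ (.rcd vs) → VEval V e₂ vk →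
      VEval V (.put e₁ k e₂) (.rcd (vs.set k vk))

inductive VEvalList : List VVal → List Expr → List VVal → Prop
  | nil : VEvalList V [] []
  | cons : VEval V e v → VEvalList V es vs → VEvalList V (e :: es) (v :: vs)
end

mutual
/-- Big-step update semantics U ⊢ e | μ ⇓ u | μ'; `put` on a boxed record
    destructively updates the store. -/
inductive UEval : List UVal → Expr → Store → UVal → Store → Prop
  | var : U[n]? = some u → UEval U (.var n) μ u μ
  | unit : UEval U .unit μ .unit μ
  | lit : UEval U (.lit n) μ (.lit n) μ
  | letE : UEval U e₁ μ u₁ μ₁ → UEval (u₁ :: U) e₂ μ₁ u μ₂ →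
      UEval U (.letE e₁ e₂) μ u μ₂
  | con : UEval U e μ u μ' → UEval U (.con c e) μ (.con c u) μ'
  | caseMatch : UEval U e₁ μ (.con c u') μ₁ → UEval (u' :: U) e₂ μ₁ u μ₂ →
      UEval U (.caseE e₁ c e₂ e₃) μ u μ₂
  | caseElse : UEval U e₁ μ (.con b u') μ₁ → b ≠ c →
      UEval (.con b u' :: U) e₃ μ₁ u μ₂ →
      UEval U (.caseE e₁ c e₂ e₃) μ u μ₂
  | rcd : UEvalList U es μ us μ' → UEval U (.rcd es) μ (.rcd us) μ'
  | takeUnboxed : UEval U e₁ μ (.rcd us) μ₁ → us[k]? = some uk →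
      UEval (.rcd us :: uk :: U) e₂ μ₁ u μ₂ → UEval U (.take e₁ k e₂) μ u μ₂
  | takeBoxed : UEval U e₁ μ (.ptr p) μ₁ → μ₁ p = some (.rcd us) →
      us[k]? = some uk →
      UEval (.ptr p :: uk :: U) e₂ μ₁ u μ₂ → UEval U (.take e₁ k e₂) μ u μ₂
  | putUnboxed : UEval U e₁ μ (.rcd us) μ₁ → UEval U e₂ μ₁ uk μ₂ →
      UEval U (.put e₁ k e₂) μ (.rcd (us.set k uk)) μ₂
  | putBoxed : UEval U e₁ μ (.ptr p) μ₁ → UEval U e₂ μ₁ uk μ₂ →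
      μ₂ p = some (.rcd us) →
      UEval U (.put e₁ k e₂) μ (.ptr p)
        (Function.update μ₂ p (some (.rcd (us.set k uk))))

inductive UEvalList : List UVal → List Expr → Store → List UVal → Store → Prop
  | nil : UEvalList U [] μ [] μ
  | cons : UEval U e μ u μ₁ → UEvalList U es μ₁ us μ₂ →
      UEvalList U (e :: es) μ (u :: us) μ₂
end

mutual
/-- The correspondence relation `u | μ : v : τ [ro: r, rw: w]`. -/
inductive Corr : UVal → Store → VVal → Ty → Set Ptr → Set Ptr → Prop
  | lit : Corr (.lit n) μ (.lit n) .prim ∅ ∅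
  | unit : Corr .unit μ .unit .unit ∅ ∅
  | con : ts[c]? = some (some τ) → Corr u μ v τ r w →
      Corr (.con c u) μ (.con c v) (.variant ts) r w
  | recU : CorrFields us μ vs fs r w →
      Corr (.rcd us) μ (.rcd vs) (.record fs .unboxed) r w
  | recW : μ p = some (.rcd us) → CorrFields us μ vs fs r w →
      Corr (.ptr p) μ (.rcd vs) (.record fs .writable) r ({p} ∪ w)
  | recR : μ p = some (.rcd us) → CorrFields us μ vs fs r ∅ →
      Corr (.ptr p) μ (.rcd vs) (.record fs .readOnly) ({p} ∪ r) ∅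

/-- Field-wise correspondence with non-aliasing of writable pointers;
    taken fields are skipped. -/
inductive CorrFields : List UVal → Store → List VVal → List (Ty × Bool) → Set Ptr → Set Ptr → Prop
  | nil : CorrFields [] μ [] [] ∅ ∅
  | cons : Corr u μ v τ r w → CorrFields us μ vs fs r' w' →
      w ∩ (r' ∪ w') = ∅ → w' ∩ (r ∪ w) = ∅ →
      CorrFields (u :: us) μ (v :: vs) ((τ, false) :: fs) (r ∪ r') (w ∪ w')
  | taken : CorrFields us μ vs fs r w →
      CorrFields (u :: us) μ (v :: vs) ((τ, true) :: fs) r w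
end

/-- Environment correspondence `U | μ : V : Γ [ro: r, rw: w]`. -/
inductive EnvCorr : List UVal → Store → List VVal → Ctx → Set Ptr → Set Ptr → Prop
  | nil : EnvCorr [] μ [] [] ∅ ∅
  | consSome : Corr u μ v τ r w → EnvCorr U μ V Γ r' w' →
      w ∩ (r' ∪ w') = ∅ → w' ∩ (r ∪ w) = ∅ →
      EnvCorr (u :: U) μ (v :: V) (some τ :: Γ) (r ∪ r') (w ∪ w')
  | consNone : EnvCorr U μ V Γ r w →
      EnvCorr (u :: U) μ (v :: V) (none :: Γ) r w

/-- The framing relation: inertia, leak freedom, fresh allocation. -/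
def frame (wi : Set Ptr) (μi : Store) (wo : Set Ptr) (μo : Store) : Prop :=
  ∀ p : Ptr,
    (p ∉ wi ∪ wo → μi p = μo p) ∧
    (p ∈ wi → p ∉ wo → μo p = none) ∧
    (p ∉ wi → p ∈ wo → μi p = none)

/-!
The value semantics is total on well-typed expressions: the language has no recursion, so
induction on the typing derivation evaluates every well-typed expression in any value
environment whose entries have the types recorded in the context. The correspondence
relation provides such an environment, because the value half of each corresponding pair is
well typed; taken record fields carry no typing obligation, which is what lets `take` and
`put` preserve well-typedness.
-/

namespace List.Forall₂

variable {α β : Type*} {R : α → β → Prop}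

theorem exists_getElem?_of_right {l₁ : List α} {l₂ : List β} (h : Forall₂ R l₁ l₂)
    {k : ℕ} {b : β} (hb : l₂[k]? = some b) : ∃ a, l₁[k]? = some a ∧ R a b := by
  induction h generalizing k with
  | nil => simp at hb
  | cons hab _ ih =>
    cases k with
    | zero =>
      simp only [getElem?_cons_zero, Option.some.injEq] at hb ⊢
      exact ⟨_, rfl, hb ▸ hab⟩
    | succ k => exact ih hb

theorem set {l₁ : List α} {l₂ : List β} (h : Forall₂ R l₁ l₂) {a : α} {b : β}
    (hab : R a b) (k : ℕ) : Forall₂ R (l₁.set k a) (l₂.set k b) := by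
  induction h generalizing k with
  | nil => exact .nil
  | cons hxy _ ih =>
    cases k with
    | zero => exact .cons hab ‹_›
    | succ k => exact .cons hxy (ih k)

theorem set_right {l₁ : List α} {l₂ : List β} (h : Forall₂ R l₁ l₂) {b : β}
    (hb : ∀ a, R a b) (k : ℕ) : Forall₂ R l₁ (l₂.set k b) := by
  induction h generalizing k with
  | nil => exact .nil
  | cons hxy _ ih =>
    cases k with
    | zero => exact .cons (hb _) ‹_›
    | succ k => exact .cons hxy (ih k)

end List.Forall₂

inductive VTyping : VVal → Ty → Prop
  | lit : VTyping (.lit n) .prim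
  | unit : VTyping .unit .unit
  | con : ts[c]? = some (some τ) → VTyping v τ → VTyping (.con c v) (.variant ts)
  | rcd : List.Forall₂ (fun v f => f.2 = false → VTyping v f.1) vs fs →
      VTyping (.rcd vs) (.record fs m)

abbrev FieldsTyping (vs : List VVal) (fs : List (Ty × Bool)) : Prop :=
  List.Forall₂ (fun v f => f.2 = false → VTyping v f.1) vs fs

def EnvTyping (V : List VVal) (Γ : Ctx) : Prop :=
  List.Forall₂ (fun v o => ∀ τ, o = some τ → VTyping v τ) V Γ

theorem VTyping.variant_cases {v : VVal} {ts : List (Option Ty)} {c : ℕ} {ρ : Ty}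
    (hts : ts[c]? = some (some ρ)) (h : VTyping v (.variant ts)) :
    (∃ v', v = .con c v' ∧ VTyping v' ρ) ∨
      ∃ b v', b ≠ c ∧ v = .con b v' ∧ VTyping v (.variant (ts.set c none)) := by
  cases h with
  | @con _ b _ v' hb hv' =>
    by_cases hbc : b = c
    · subst hbc
      obtain rfl : ρ = _ := by simpa [hts] using hb
      exact .inl ⟨v', rfl, hv'⟩
    · exact .inr ⟨b, v', hbc, rfl, .con (by rwa [List.getElem?_set_ne (Ne.symm hbc)]) hv'⟩

theorem FieldsTyping.exists_getElem? {vs : List VVal} {fs : List (Ty × Bool)} {k : ℕ}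
    {ρ : Ty} (h : FieldsTyping vs fs) (hk : fs[k]? = some (ρ, false)) :
    ∃ vk, vs[k]? = some vk ∧ VTyping vk ρ :=
  let ⟨vk, hvk, hty⟩ := h.exists_getElem?_of_right hk
  ⟨vk, hvk, hty rfl⟩

theorem FieldsTyping.set_taken {vs : List VVal} {fs : List (Ty × Bool)}
    (h : FieldsTyping vs fs) (k : ℕ) (ρ : Ty) : FieldsTyping vs (fs.set k (ρ, true)) :=
  h.set_right (fun _ (h : true = false) => nomatch h) k

theorem Corr.vTyping {u : UVal} {μ : Store} {v : VVal} {τ : Ty} {r w : Set Ptr}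
    (h : Corr u μ v τ r w) : VTyping v τ := by
  induction h using Corr.rec (motive_2 := fun _ _ vs fs _ _ _ => FieldsTyping vs fs) with
  | lit => exact .lit
  | unit => exact .unit
  | con hts _ ih => exact .con hts ih
  | recU _ ih | recW _ _ ih | recR _ _ ih => exact .rcd ih
  | nil => exact .nil
  | cons _ _ _ _ ih₁ ih₂ => exact .cons (fun _ => ih₁) ih₂
  | taken _ ih => exact .cons nofun ih

namespace EnvTyping

theorem cons {V : List VVal} {Γ : Ctx} {v : VVal} {τ : Ty} (hv : VTyping v τ)
    (hV : EnvTyping V Γ) : EnvTyping (v :: V) (some τ :: Γ) :=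
  List.Forall₂.cons (by rintro _ ⟨⟩; exact hv) hV

theorem exists_getElem? {V : List VVal} {Γ : Ctx} {n : ℕ} {τ : Ty} (hV : EnvTyping V Γ)
    (hn : Γ[n]? = some (some τ)) : ∃ v, V[n]? = some v ∧ VTyping v τ :=
  let ⟨v, hv, hty⟩ := List.Forall₂.exists_getElem?_of_right hV hn
  ⟨v, hv, hty τ rfl⟩

end EnvTyping

theorem EnvCorr.envTyping {U : List UVal} {μ : Store} {V : List VVal} {Γ : Ctx}
    {r w : Set Ptr} (h : EnvCorr U μ V Γ r w) : EnvTyping V Γ := by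
  induction h with
  | nil => exact .nil
  | consSome hc _ _ _ ih => exact .cons hc.vTyping ih
  | consNone _ ih => exact List.Forall₂.cons nofun ih

theorem Weaken.envTyping {Γ Γ' : Ctx} {V : List VVal} (h : Weaken Γ Γ')
    (hV : EnvTyping V Γ) : EnvTyping V Γ' := by
  induction h generalizing V with
  | nil => exact hV
  | keep _ ih => cases hV with | cons hv hV => exact List.Forall₂.cons hv (ih hV)
  | drop _ _ _ ih => cases hV with | cons _ hV => exact List.Forall₂.cons nofun (ih hV)

theorem Split.envTyping {Γ Γ₁ Γ₂ : Ctx} {V : List VVal} (h : Split Γ Γ₁ Γ₂)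
    (hV : EnvTyping V Γ) : EnvTyping V Γ₁ ∧ EnvTyping V Γ₂ := by
  induction h generalizing V with
  | nil => exact ⟨hV, hV⟩
  | none _ ih | both _ _ _ ih =>
    cases hV with
    | cons hv hV => exact (ih hV).imp (List.Forall₂.cons hv) (List.Forall₂.cons hv)
  | left _ ih =>
    cases hV with
    | cons hv hV => exact (ih hV).imp (List.Forall₂.cons hv) (List.Forall₂.cons nofun)
  | right _ ih =>
    cases hV with
    | cons hv hV => exact (ih hV).imp (List.Forall₂.cons nofun) (List.Forall₂.cons hv)

theorem Typing.vEval_total {Γ : Ctx} {e : Expr} {τ : Ty} {V : List VVal} (ht : Typing Γ e τ)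
    (hV : EnvTyping V Γ) : ∃ v, VEval V e v ∧ VTyping v τ := by
  revert V
  induction ht using Typing.rec
    (motive_2 := fun Γ es τs _ => ∀ {V}, EnvTyping V Γ →
      ∃ vs, VEvalList V es vs ∧ FieldsTyping vs (τs.map (·, false))) with
  | var hw hn =>
    intro V hV
    obtain ⟨v, hv, hty⟩ := (hw.envTyping hV).exists_getElem? hn.1
    exact ⟨v, .var hv, hty⟩
  | unit => exact fun _ => ⟨_, .unit, .unit⟩
  | lit => exact fun _ => ⟨_, .lit, .lit⟩
  | letE hs _ _ ih₁ ih₂ =>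
    intro V hV
    obtain ⟨hV₁, hV₂⟩ := hs.envTyping hV
    obtain ⟨v₁, he₁, hty₁⟩ := ih₁ hV₁
    obtain ⟨v, he₂, hty⟩ := ih₂ (hV₂.cons hty₁)
    exact ⟨v, .letE he₁ he₂, hty⟩
  | con hts _ ih =>
    intro V hV
    obtain ⟨v, he, hty⟩ := ih hV
    exact ⟨_, .con he, .con hts hty⟩
  | caseE hs _ hts _ _ ih₁ ih₂ ih₃ =>
    intro V hV
    obtain ⟨hV₁, hV₂⟩ := hs.envTyping hV
    obtain ⟨v₁, he₁, hty₁⟩ := ih₁ hV₁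
    rcases hty₁.variant_cases hts with ⟨v', rfl, hv'⟩ | ⟨b, v', hbc, rfl, hrest⟩
    · obtain ⟨v, he₂, hty⟩ := ih₂ (hV₂.cons hv')
      exact ⟨v, .caseMatch he₁ he₂, hty⟩
    · obtain ⟨v, he₃, hty⟩ := ih₃ (hV₂.cons hrest)
      exact ⟨v, .caseElse he₁ hbc he₃, hty⟩
  | rcd _ ih =>
    intro V hV
    obtain ⟨vs, hes, hvs⟩ := ih hV
    exact ⟨_, .rcd hes, .rcd hvs⟩
  | take hs _ _ hk _ ih₁ ih₂ =>
    intro V hV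
    obtain ⟨hV₁, hV₂⟩ := hs.envTyping hV
    obtain ⟨v₁, he₁, hty₁⟩ := ih₁ hV₁
    cases hty₁ with
    | rcd hvs =>
      obtain ⟨vk, hvk, htyk⟩ := FieldsTyping.exists_getElem? hvs hk
      obtain ⟨v, he₂, hty⟩ :=
        ih₂ ((hV₂.cons htyk).cons (.rcd (FieldsTyping.set_taken hvs _ _)))
      exact ⟨v, .take he₁ hvk he₂, hty⟩
  | put hs _ _ _ _ ih₁ ih₂ =>
    intro V hV
    obtain ⟨hV₁, hV₂⟩ := hs.envTyping hV
    obtain ⟨v₁, he₁, hty₁⟩ := ih₁ hV₁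
    obtain ⟨vk, he₂, htyk⟩ := ih₂ hV₂
    cases hty₁ with
    | rcd hvs => exact ⟨_, .put he₁ he₂, .rcd (hvs.set (fun _ => htyk) _)⟩
  | nil => exact ⟨[], .nil, .nil⟩
  | cons hs _ _ ih₁ ih₂ hV =>
    obtain ⟨hV₁, hV₂⟩ := hs.envTyping hV
    obtain ⟨v, he, hty⟩ := ih₁ hV₁
    obtain ⟨vs, hes, hvs⟩ := ih₂ hV₂
    exact ⟨v :: vs, .cons he hes, .cons (fun _ => hty) hvs⟩

/-- Upward propagation of evaluation: whenever the update semantics evaluates,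
    the value semantics also evaluates. -/
theorem upward_propagation {Γ : Ctx} {e : Expr} {τ : Ty}
    {U : List UVal} {μ μ' : Store} {V : List VVal} {r w : Set Ptr} {u : UVal}
    (ht : Typing Γ e τ) (hc : EnvCorr U μ V Γ r w)
    (hu : UEval U e μ u μ') :
    ∃ v, VEval V e v :=
  let ⟨v, hv, _⟩ := ht.vEval_total hc.envTyping
  ⟨v, hv⟩
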